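/- Let Γ be a group and let 𝒳 be a Chabauty-closed set of subgroups of Γ. Let 𝒳_min denote the set of X ∈ 𝒳 that are minimal in 𝒳, i.e. such that X' ∈ 𝒳 and X' ≤ X imply X' = X. If every X ∈ 𝒳_min is finitely generated, then 𝒳_min is a finite set. -/

import Mathlib

/-!
Since `Γ → Bool` is compact, the Chabauty-closed family `𝒳` is compact. Infima of chains in `𝒳`
are Chabauty limits of the chain, hence lie in `𝒳`, so by Zorn every member of `𝒳` contains a
minimal one. For a minimal `X` generated by a finite set `S`, the subgroups containing `S` form
an open set; these open sets cover `𝒳`, and a finite subcover indexed by minimal `X₁, …, Xₙ`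
forces every minimal subgroup, which must contain some `Xᵢ`, to equal it.
-/

/-- The characteristic function of a subgroup, viewed as an element of the product space
`G → Bool` (with `Bool` discrete and `G → Bool` carrying the product topology).  The Chabauty
topology on the set of subgroups of `G` is the subspace topology under `H ↦ chi H`. -/
noncomputable def chi {G : Type*} [Group G] (H : Subgroup G) : G → Bool :=
  fun g => @decide (g ∈ H) (Classical.propDecidable _)

theorem mem_closure_of_forall_finset_exists_eqOn {ι : Type*} {X : ι → Type*}
    [∀ i, TopologicalSpace (X i)] {A : Set (∀ i, X i)} {f : ∀ i, X i}
    (h : ∀ I : Finset ι, ∃ a ∈ A, ∀ i ∈ I, a i = f i) : f ∈ closure A := by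
  refine mem_closure_iff.mpr fun U hU hfU ↦ ?_
  obtain ⟨I, u, hu, hIU⟩ := isOpen_pi_iff.mp hU f hfU
  obtain ⟨a, haA, haf⟩ := h I
  exact ⟨a, hIU fun i hi ↦ haf i hi ▸ (hu i hi).2, haA⟩

theorem isOpen_setOf_forall_mem_eq_true {ι : Type*} {S : Set ι} (hS : S.Finite) :
    IsOpen {f : ι → Bool | ∀ s ∈ S, f s = true} := by
  simp only [Set.ofPred_forall]
  exact hS.isOpen_biInter fun s _ ↦
    (isOpen_discrete {true}).preimage (continuous_apply (A := fun _ : ι ↦ Bool) s)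

section Chabauty

variable {G : Type*} [Group G]

@[simp]
theorem chi_eq_true_iff (H : Subgroup G) (g : G) : chi H g = true ↔ g ∈ H := by
  simp [chi]

theorem chi_eq_chi_iff (H K : Subgroup G) (g : G) : chi H g = chi K g ↔ (g ∈ H ↔ g ∈ K) := by
  rw [← chi_eq_true_iff H, ← chi_eq_true_iff K, Bool.eq_iff_iff]

theorem chi_injective : Function.Injective (chi (G := G)) :=
  fun H K h ↦ Subgroup.ext fun g ↦ (chi_eq_chi_iff H K g).mp (congrFun h g)

theorem chi_sInf_mem_closure {c : Set (Subgroup G)} (hne : c.Nonempty)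
    (hdir : DirectedOn (· ≥ ·) c) : chi (sInf c) ∈ closure (chi '' c) := by
  classical
  refine mem_closure_of_forall_finset_exists_eqOn fun I ↦ ?_
  have hcompl : DirectedOn (fun H K : Subgroup G ↦ (H : Set G)ᶜ ⊆ (K : Set G)ᶜ) c :=
    hdir.mono fun _ _ hHK ↦ Set.compl_subset_compl.mpr hHK
  have hout : ((I.filter (· ∉ sInf c) : Finset G) : Set G) ⊆ ⋃ K ∈ c, (K : Set G)ᶜ := by
    intro g hg
    simpa [Subgroup.mem_sInf] using (Finset.mem_filter.mp hg).2
  -- the finitely many points of `I` outside `sInf c` all lie outside a single `K ∈ c`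
  obtain ⟨K, hKc, hK⟩ := hcompl.exists_mem_subset_of_finset_subset_biUnion hne hout
  refine ⟨chi K, Set.mem_image_of_mem _ hKc, fun g hg ↦ (chi_eq_chi_iff _ _ g).mpr ⟨?_, ?_⟩⟩
  · exact fun hgK ↦ of_not_not fun hg' ↦ hK (Finset.mem_filter.mpr ⟨hg, hg'⟩) hgK
  · exact fun hg' ↦ sInf_le hKc hg'

theorem IsClosed.sInf_mem_of_isChain {𝒳 : Set (Subgroup G)} (h𝒳 : IsClosed (chi '' 𝒳))
    {c : Set (Subgroup G)} (hc : c ⊆ 𝒳) (hchain : IsChain (· ≤ ·) c) (hne : c.Nonempty) :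
    sInf c ∈ 𝒳 := by
  have hdir : DirectedOn (· ≥ ·) c := IsChain.directedOn (r := (· ≥ ·)) hchain.symm
  obtain ⟨X, hX, hXc⟩ : chi (sInf c) ∈ chi '' 𝒳 :=
    h𝒳.closure_subset_iff.mpr (Set.image_mono hc) (chi_sInf_mem_closure hne hdir)
  exact chi_injective hXc ▸ hX

theorem IsClosed.exists_minimal_le {𝒳 : Set (Subgroup G)} (h𝒳 : IsClosed (chi '' 𝒳))
    {Y : Subgroup G} (hY : Y ∈ 𝒳) : ∃ X, X ≤ Y ∧ Minimal (· ∈ 𝒳) X :=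
  @zorn_le_nonempty₀ (Subgroup G)ᵒᵈ _ 𝒳
    (fun c hc hchain y hy ↦ ⟨OrderDual.toDual (sInf (OrderDual.toDual ⁻¹' c)),
      h𝒳.sInf_mem_of_isChain hc hchain.symm ⟨y, hy⟩,
      fun z hz ↦ (sInf_le hz : sInf _ ≤ OrderDual.ofDual z)⟩) Y hY

theorem chi_mem_setOf_forall_mem_eq_true_iff (S : Set G) (H : Subgroup G) :
    chi H ∈ {f : G → Bool | ∀ s ∈ S, f s = true} ↔ Subgroup.closure S ≤ H := by
  simp [Subgroup.closure_le, Set.subset_def]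

end Chabauty

/-- Let `Γ` be a group and `𝒳` a Chabauty-closed set of subgroups of `Γ`.
If every minimal element of `𝒳` is finitely generated, then the set of minimal elements of
`𝒳` is finite. -/
theorem stmt7 {Γ : Type*} [Group Γ] (𝒳 : Set (Subgroup Γ))
    (hX : IsClosed (chi '' 𝒳))
    (hfg : ∀ X ∈ 𝒳, (∀ X' ∈ 𝒳, X' ≤ X → X' = X) → X.FG) :
    {X ∈ 𝒳 | ∀ X' ∈ 𝒳, X' ≤ X → X' = X}.Finite := by
  set M := {X ∈ 𝒳 | ∀ X' ∈ 𝒳, X' ≤ X → X' = X}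
  choose S hS using fun X : M ↦ hfg X X.2.1 X.2.2
  let U : M → Set (Γ → Bool) := fun X ↦ {f | ∀ s ∈ S X, f s = true}
  have hU : ∀ X Y, chi Y ∈ U X ↔ (X : Subgroup Γ) ≤ Y := fun X Y ↦
    hS X ▸ chi_mem_setOf_forall_mem_eq_true_iff _ Y
  have hcover : chi '' 𝒳 ⊆ ⋃ X, U X := by
    rintro _ ⟨Y, hY, rfl⟩
    obtain ⟨X, hXY, hXmin⟩ := hX.exists_minimal_le hY
    exact Set.mem_iUnion.mpr ⟨⟨X, hXmin.1, fun X' hX' hle ↦ le_antisymm hle (hXmin.2 hX' hle)⟩,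
      (hU _ Y).mpr hXY⟩
  obtain ⟨t, ht⟩ := hX.isCompact.elim_finite_subcover U
    (fun X ↦ isOpen_setOf_forall_mem_eq_true (S X).finite_toSet) hcover
  refine (t.finite_toSet.image Subtype.val).subset fun Y hY ↦ ?_
  obtain ⟨X, hXt, hYX⟩ := Set.mem_iUnion₂.mp (ht ⟨Y, hY.1, rfl⟩)
  exact ⟨X, hXt, hY.2 X X.2.1 ((hU X Y).mp hYX)⟩
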